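/- arXiv:math/0006027 — 3 statements merged into one kernel-verified Lean document; each statement's English description precedes it below -/
import Mathlib

section
/- The kernel of the 8×8 matrix M of the previous context (diagonal -2, off-diagonal 1 at positions (1,2),(2,3),(3,4),(4,5),(4,6),(6,7),(7,8) and transposes, 0 elsewhere), viewed as a linear map ℚ⁸ → ℚ⁸, is one-dimensional. -/
/-- The Ẽ₇-type intersection matrix: diagonal -2, off-diagonal 1 at the
symmetric positions (1,2),(2,3),(3,4),(4,5),(4,6),(6,7),(7,8), 0 elsewhere. -/
def E7Matrix : Matrix (Fin 8) (Fin 8) ℚ :=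
  !![-2,  1,  0,  0,  0,  0,  0,  0;
      1, -2,  1,  0,  0,  0,  0,  0;
      0,  1, -2,  1,  0,  0,  0,  0;
      0,  0,  1, -2,  1,  1,  0,  0;
      0,  0,  0,  1, -2,  0,  0,  0;
      0,  0,  0,  1,  0, -2,  1,  0;
      0,  0,  0,  0,  0,  1, -2,  1;
      0,  0,  0,  0,  0,  0,  1, -2]

private lemma cons8_0 {α : Type*} (a b c d e f g h : α) : (![a,b,c,d,e,f,g,h]) (0 : Fin 8) = a := rfl
private lemma cons8_1 {α : Type*} (a b c d e f g h : α) : (![a,b,c,d,e,f,g,h]) (1 : Fin 8) = b := rfl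
private lemma cons8_2 {α : Type*} (a b c d e f g h : α) : (![a,b,c,d,e,f,g,h]) (2 : Fin 8) = c := rfl
private lemma cons8_3 {α : Type*} (a b c d e f g h : α) : (![a,b,c,d,e,f,g,h]) (3 : Fin 8) = d := rfl
private lemma cons8_4 {α : Type*} (a b c d e f g h : α) : (![a,b,c,d,e,f,g,h]) (4 : Fin 8) = e := rfl
private lemma cons8_5 {α : Type*} (a b c d e f g h : α) : (![a,b,c,d,e,f,g,h]) (5 : Fin 8) = f := rfl
private lemma cons8_6 {α : Type*} (a b c d e f g h : α) : (![a,b,c,d,e,f,g,h]) (6 : Fin 8) = g := rfl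
private lemma cons8_7 {α : Type*} (a b c d e f g h : α) : (![a,b,c,d,e,f,g,h]) (7 : Fin 8) = h := rfl
private lemma cons8_0' {α : Type*} (a b c d e f g h : α) : (![a,b,c,d,e,f,g,h]) (⟨0, by omega⟩ : Fin 8) = a := rfl
private lemma cons8_1' {α : Type*} (a b c d e f g h : α) : (![a,b,c,d,e,f,g,h]) (⟨1, by omega⟩ : Fin 8) = b := rfl
private lemma cons8_2' {α : Type*} (a b c d e f g h : α) : (![a,b,c,d,e,f,g,h]) (⟨2, by omega⟩ : Fin 8) = c := rfl
private lemma cons8_3' {α : Type*} (a b c d e f g h : α) : (![a,b,c,d,e,f,g,h]) (⟨3, by omega⟩ : Fin 8) = d := rfl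
private lemma cons8_4' {α : Type*} (a b c d e f g h : α) : (![a,b,c,d,e,f,g,h]) (⟨4, by omega⟩ : Fin 8) = e := rfl
private lemma cons8_5' {α : Type*} (a b c d e f g h : α) : (![a,b,c,d,e,f,g,h]) (⟨5, by omega⟩ : Fin 8) = f := rfl
private lemma cons8_6' {α : Type*} (a b c d e f g h : α) : (![a,b,c,d,e,f,g,h]) (⟨6, by omega⟩ : Fin 8) = g := rfl
private lemma cons8_7' {α : Type*} (a b c d e f g h : α) : (![a,b,c,d,e,f,g,h]) (⟨7, by omega⟩ : Fin 8) = h := rfl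

theorem E7Matrix_ker_one_dimensional :
    Module.finrank ℚ (LinearMap.ker E7Matrix.mulVecLin) = 1 := by
  have hker : LinearMap.ker E7Matrix.mulVecLin
      = Submodule.span ℚ {(![1,2,3,4,2,3,2,1] : Fin 8 → ℚ)} := by
    apply le_antisymm
    · intro x hx
      have hx' : E7Matrix.mulVec x = 0 := hx
      have h0 := congrFun hx' 0
      have h1 := congrFun hx' 1
      have h2 := congrFun hx' 2
      have h3 := congrFun hx' 3
      have h4 := congrFun hx' 4
      have h5 := congrFun hx' 5
      have h6 := congrFun hx' 6
      have h7 := congrFun hx' 7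
      simp only [E7Matrix, Matrix.mulVec, dotProduct, Fin.sum_univ_eight,
        Matrix.of_apply, cons8_0, cons8_1, cons8_2, cons8_3, cons8_4, cons8_5, cons8_6, cons8_7, cons8_0', cons8_1', cons8_2', cons8_3', cons8_4', cons8_5', cons8_6', cons8_7', Pi.zero_apply] at h0 h1 h2 h3 h4 h5 h6 h7
      have hx8 : x = (x 0) • ![1,2,3,4,2,3,2,1] := by
        funext i
        fin_cases i <;>
          simp only [Fin.reduceFinMk, Pi.smul_apply, smul_eq_mul, cons8_0, cons8_1, cons8_2, cons8_3, cons8_4, cons8_5, cons8_6, cons8_7, cons8_0', cons8_1', cons8_2', cons8_3', cons8_4', cons8_5', cons8_6', cons8_7'] <;> linarith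
      rw [hx8]
      exact Submodule.smul_mem _ _ (Submodule.mem_span_singleton_self _)
    · rw [Submodule.span_le]
      intro v hv
      simp only [Set.mem_singleton_iff] at hv
      subst hv
      simp only [SetLike.mem_coe, LinearMap.mem_ker]
      show E7Matrix.mulVec _ = 0
      funext i
      fin_cases i <;>
        · simp only [E7Matrix, Matrix.mulVec, dotProduct, Fin.sum_univ_eight,
            Matrix.of_apply, cons8_0, cons8_1, cons8_2, cons8_3, cons8_4, cons8_5, cons8_6, cons8_7, cons8_0', cons8_1', cons8_2', cons8_3', cons8_4', cons8_5', cons8_6', cons8_7', Pi.zero_apply]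
          norm_num
  rw [hker, finrank_span_singleton]
  intro h
  have := congrFun h 0
  simp only [cons8_0, Pi.zero_apply] at this
  exact one_ne_zero this
end

section
/- Let t be a nonzero complex number and n a positive integer such that (-t)ⁿ ≠ 1. Then the 9×9 matrix δₙ(t) (diagonal entries -2, entries 1 at symmetric positions (1,2),(3,4),(4,5),(5,6),(6,7),(7,8),(8,9),(1,9), entry (2,3) = (-t)⁻ⁿ, entry (3,2) = (-t)ⁿ, other entries 0) is invertible; in particular its kernel is trivial. -/
open Matrix

/-- The parametrized 9×9 matrix of the Ã₈ local cohomology computation: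
diagonal -2; entries 1 at the symmetric positions
(1,2),(3,4),(4,5),(5,6),(6,7),(7,8),(8,9),(1,9); entry (2,3) = s⁻¹ and
entry (3,2) = s; all other entries 0. -/
noncomputable def DeltaA8 (s : ℂ) : Matrix (Fin 9) (Fin 9) ℂ :=
  !![-2,   1,   0,  0,  0,  0,  0,  0,  1;
      1,  -2, s⁻¹,  0,  0,  0,  0,  0,  0;
      0,   s,  -2,  1,  0,  0,  0,  0,  0;
      0,   0,   1, -2,  1,  0,  0,  0,  0;
      0,   0,   0,  1, -2,  1,  0,  0,  0;
      0,   0,   0,  0,  1, -2,  1,  0,  0;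
      0,   0,   0,  0,  0,  1, -2,  1,  0;
      0,   0,   0,  0,  0,  0,  1, -2,  1;
      1,   0,   0,  0,  0,  0,  0,  1, -2]

lemma DeltaA8_mulVec_eq_zero {s : ℂ} (hs0 : s ≠ 0) (hs1 : s ≠ 1)
    (v : Fin 9 → ℂ) (hv : (DeltaA8 s).mulVec v = 0) : v = 0 := by
  have hinv : s * s⁻¹ = 1 := mul_inv_cancel₀ hs0
  have hsq : (s - 1) ^ 2 ≠ 0 := pow_ne_zero _ (sub_ne_zero.mpr hs1)
  have h0 := congrFun hv 0
  have h1 := congrFun hv 1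
  have h2 := congrFun hv (Fin.succ (Fin.succ (0)))
  have h3 := congrFun hv (Fin.succ (Fin.succ (Fin.succ (0))))
  have h4 := congrFun hv (Fin.succ (Fin.succ (Fin.succ (Fin.succ (0)))))
  have h5 := congrFun hv (Fin.succ (Fin.succ (Fin.succ (Fin.succ (Fin.succ (0))))))
  have h6 := congrFun hv (Fin.succ (Fin.succ (Fin.succ (Fin.succ (Fin.succ (Fin.succ (0)))))))
  have h7 := congrFun hv (Fin.succ (Fin.succ (Fin.succ (Fin.succ (Fin.succ (Fin.succ (Fin.succ (0))))))))
  have h8 := congrFun hv (Fin.succ (Fin.succ (Fin.succ (Fin.succ (Fin.succ (Fin.succ (Fin.succ (Fin.succ (0)))))))))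
  simp [DeltaA8, mulVec, dotProduct, Fin.sum_univ_succ, Fin.succ]
    at h0 h1 h2 h3 h4 h5 h6 h7 h8
  have e0 : (s - 1)^2 * v 0 = 0 := by
    linear_combination ((9)*s) * h0 + ((8)*s + (1)*s^2) * h1 + ((7) + (2)*s) * h2 + ((6) + (3)*s) * h3 + ((5) + (4)*s) * h4 + ((4) + (5)*s) * h5 + ((3) + (6)*s) * h6 + ((2) + (7)*s) * h7 + ((1) + (8)*s) * h8 + ((-8) + (-1)*s) * (v 2) * hinv
  have e1 : (s - 1)^2 * v 1 = 0 := by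
    linear_combination ((1) + (8)*s) * h0 + ((9)*s) * h1 + ((8) + (1)*s) * h2 + ((7) + (2)*s) * h3 + ((6) + (3)*s) * h4 + ((5) + (4)*s) * h5 + ((4) + (5)*s) * h6 + ((3) + (6)*s) * h7 + ((2) + (7)*s) * h8 + ((-9)) * (v 2) * hinv
  have e2 : (s - 1)^2 * v 2 = 0 := by
    linear_combination ((2)*s + (7)*s^2) * h0 + ((1)*s + (8)*s^2) * h1 + ((9)*s) * h2 + ((8)*s + (1)*s^2) * h3 + ((7)*s + (2)*s^2) * h4 + ((6)*s + (3)*s^2) * h5 + ((5)*s + (4)*s^2) * h6 + ((4)*s + (5)*s^2) * h7 + ((3)*s + (6)*s^2) * h8 + ((-1) + (-8)*s) * (v 2) * hinv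
  have e3 : (s - 1)^2 * v 3 = 0 := by
    linear_combination ((3)*s + (6)*s^2) * h0 + ((2)*s + (7)*s^2) * h1 + ((1) + (8)*s) * h2 + ((9)*s) * h3 + ((8)*s + (1)*s^2) * h4 + ((7)*s + (2)*s^2) * h5 + ((6)*s + (3)*s^2) * h6 + ((5)*s + (4)*s^2) * h7 + ((4)*s + (5)*s^2) * h8 + ((-2) + (-7)*s) * (v 2) * hinv
  have e4 : (s - 1)^2 * v 4 = 0 := by
    linear_combination ((4)*s + (5)*s^2) * h0 + ((3)*s + (6)*s^2) * h1 + ((2) + (7)*s) * h2 + ((1) + (8)*s) * h3 + ((9)*s) * h4 + ((8)*s + (1)*s^2) * h5 + ((7)*s + (2)*s^2) * h6 + ((6)*s + (3)*s^2) * h7 + ((5)*s + (4)*s^2) * h8 + ((-3) + (-6)*s) * (v 2) * hinv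
  have e5 : (s - 1)^2 * v 5 = 0 := by
    linear_combination ((5)*s + (4)*s^2) * h0 + ((4)*s + (5)*s^2) * h1 + ((3) + (6)*s) * h2 + ((2) + (7)*s) * h3 + ((1) + (8)*s) * h4 + ((9)*s) * h5 + ((8)*s + (1)*s^2) * h6 + ((7)*s + (2)*s^2) * h7 + ((6)*s + (3)*s^2) * h8 + ((-4) + (-5)*s) * (v 2) * hinv
  have e6 : (s - 1)^2 * v 6 = 0 := by
    linear_combination ((6)*s + (3)*s^2) * h0 + ((5)*s + (4)*s^2) * h1 + ((4) + (5)*s) * h2 + ((3) + (6)*s) * h3 + ((2) + (7)*s) * h4 + ((1) + (8)*s) * h5 + ((9)*s) * h6 + ((8)*s + (1)*s^2) * h7 + ((7)*s + (2)*s^2) * h8 + ((-5) + (-4)*s) * (v 2) * hinv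
  have e7 : (s - 1)^2 * v 7 = 0 := by
    linear_combination ((7)*s + (2)*s^2) * h0 + ((6)*s + (3)*s^2) * h1 + ((5) + (4)*s) * h2 + ((4) + (5)*s) * h3 + ((3) + (6)*s) * h4 + ((2) + (7)*s) * h5 + ((1) + (8)*s) * h6 + ((9)*s) * h7 + ((8)*s + (1)*s^2) * h8 + ((-6) + (-3)*s) * (v 2) * hinv
  have e8 : (s - 1)^2 * v 8 = 0 := by
    linear_combination ((8)*s + (1)*s^2) * h0 + ((7)*s + (2)*s^2) * h1 + ((6) + (3)*s) * h2 + ((5) + (4)*s) * h3 + ((4) + (5)*s) * h4 + ((3) + (6)*s) * h5 + ((2) + (7)*s) * h6 + ((1) + (8)*s) * h7 + ((9)*s) * h8 + ((-7) + (-2)*s) * (v 2) * hinv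
  funext i
  fin_cases i <;> simp only [Pi.zero_apply] <;>
    [ exact (mul_eq_zero.mp e0).resolve_left hsq;
      exact (mul_eq_zero.mp e1).resolve_left hsq;
      exact (mul_eq_zero.mp e2).resolve_left hsq;
      exact (mul_eq_zero.mp e3).resolve_left hsq;
      exact (mul_eq_zero.mp e4).resolve_left hsq;
      exact (mul_eq_zero.mp e5).resolve_left hsq;
      exact (mul_eq_zero.mp e6).resolve_left hsq;
      exact (mul_eq_zero.mp e7).resolve_left hsq;
      exact (mul_eq_zero.mp e8).resolve_left hsq]

theorem DeltaA8_invertible (t : ℂ) (ht : t ≠ 0) (n : ℕ) (hn : 1 ≤ n)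
    (h : (-t) ^ n ≠ 1) :
    IsUnit (DeltaA8 ((-t) ^ n)) ∧
      LinearMap.ker (DeltaA8 ((-t) ^ n)).mulVecLin = ⊥ := by
  set s : ℂ := (-t) ^ n with hsdef
  have hs0 : s ≠ 0 := pow_ne_zero _ (neg_ne_zero.mpr ht)
  have hker : LinearMap.ker (DeltaA8 s).mulVecLin = ⊥ := by
    rw [LinearMap.ker_eq_bot']
    intro v hv
    exact DeltaA8_mulVec_eq_zero hs0 h v (by simpa using hv)
  refine ⟨?_, hker⟩
  rw [← Matrix.mulVec_injective_iff_isUnit]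
  intro x y hxy
  have : (DeltaA8 s).mulVecLin (x - y) = 0 := by
    simp [Matrix.mulVecLin_apply, Matrix.mulVec_sub, hxy]
  have := LinearMap.ker_eq_bot.mp hker
  exact sub_eq_zero.mp (by simpa using (LinearMap.ker_eq_bot'.mp hker) _ ‹(DeltaA8 s).mulVecLin (x - y) = 0›)
end

section
/- For any nonzero complex number s, the 9×9 matrix Δ(s) (as defined: diagonal -2, ones at symmetric positions (1,2),(3,4),(4,5),(5,6),(6,7),(7,8),(8,9),(1,9), entry (2,3) = 1/s, entry (3,2) = s) satisfies: the rank of Δ(s) is at least 8 for all s ≠ 0. -/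
/-!
Deleting the second vertex of the Ã₈ cycle removes both entries `s` and `s⁻¹` of `Δ(s)` and
leaves minus the Cartan matrix of type A₈. Its inverse is `(9 : ℚ)⁻¹ • G` with
`G i j = (min i j + 1) * (8 - max i j)`, so it is nonsingular and `Δ(s)` has a nonsingular
`8 × 8` minor.
-/

open Matrix

theorem Fin.sum_ite_val_eq_add_one {n : ℕ} (g : ℤ → ℤ) (hg : g n = 0) (i : Fin n) :
    ∑ k : Fin n, (if (k : ℕ) = i + 1 then g k else 0) = g (i + 1) := by
  rw [Fin.sum_univ_eq_sum_range (fun k => if k = (i : ℕ) + 1 then g k else 0)]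
  simp only [Finset.sum_ite_eq', Finset.mem_range]
  split_ifs with h
  · push_cast; rfl
  · rw [show (i : ℤ) + 1 = n by omega, hg]

theorem Fin.sum_ite_val_add_one_eq {n : ℕ} (g : ℤ → ℤ) (hg : g (-1) = 0) (i : Fin n) :
    ∑ k : Fin n, (if (k : ℕ) + 1 = i then g k else 0) = g (i - 1) := by
  rw [Fin.sum_univ_eq_sum_range (fun k => if k + 1 = (i : ℕ) then g k else 0)]
  obtain ⟨_ | m, hm⟩ := i
  · simpa using hg.symm
  · simp only [add_left_inj, Finset.sum_ite_eq', Finset.mem_range, if_pos (by omega : m < n)]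
    push_cast; ring_nf

theorem Int.two_mul_sub_sub_min_mul_max (n i j : ℤ) :
    2 * ((min i j + 1) * (n - max i j)) - (min (i + 1) j + 1) * (n - max (i + 1) j)
      - (min (i - 1) j + 1) * (n - max (i - 1) j) = if i = j then n + 1 else 0 := by
  rcases lt_trichotomy i j with h | rfl | h
  · rw [if_neg h.ne, min_eq_left h.le, max_eq_right h.le, min_eq_left (by omega),
      max_eq_right (by omega), min_eq_left (by omega), max_eq_right (by omega)]
    ring
  · rw [if_pos rfl, min_self, max_self, min_eq_right (by omega), max_eq_left (by omega),
      min_eq_left (by omega), max_eq_right (by omega)]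
    ring
  · rw [if_neg h.ne', min_eq_right h.le, max_eq_left h.le, min_eq_right (by omega),
      max_eq_left (by omega), min_eq_right (by omega), max_eq_left (by omega)]
    ring

namespace CartanMatrix

/-- `(n + 1) • (A n)⁻¹`, the Green's function of the discrete Laplacian on a path. -/
def adjA (n : ℕ) : Matrix (Fin n) (Fin n) ℤ :=
  Matrix.of fun i j => (min (i : ℤ) j + 1) * (n - max (i : ℤ) j)

theorem A_apply_eq_ite (n : ℕ) (i k : Fin n) :
    A n i k = 2 * (if (k : ℕ) = i then 1 else 0) - (if (k : ℕ) = i + 1 then 1 else 0)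
      - (if (k : ℕ) + 1 = i then 1 else 0) := by
  simp only [A, of_apply, Fin.ext_iff]
  split_ifs <;> omega

theorem A_mul_adjA (n : ℕ) : A n * adjA n = (n + 1 : ℤ) • 1 := by
  ext i j
  let g : ℤ → ℤ := fun k => (min k j + 1) * (n - max k j)
  have hadj (k : Fin n) : adjA n k j = g k := rfl
  have hsum : ∑ k, A n i k * adjA n k j = 2 * g i - g (i + 1) - g (i - 1) := by
    simp only [A_apply_eq_ite, hadj, sub_mul, mul_assoc, ite_mul, one_mul, zero_mul,
      Finset.sum_sub_distrib, ← Finset.mul_sum, Fin.val_inj, Finset.sum_ite_eq',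
      Finset.mem_univ, if_true]
    rw [Fin.sum_ite_val_eq_add_one g (by simp [g]), Fin.sum_ite_val_add_one_eq g (by simp [g])]
  rw [mul_apply, hsum, Int.two_mul_sub_sub_min_mul_max]
  simp [one_apply, Fin.ext_iff]

theorem det_A_ne_zero (n : ℕ) : (A n).det ≠ 0 := by
  intro h
  have := congrArg det (A_mul_adjA n)
  rw [det_mul, h, zero_mul, det_smul, det_one, mul_one, Fintype.card_fin] at this
  exact pow_ne_zero n (by omega) this.symm

theorem rank_neg_map_A {R : Type*} [CommRing R] [IsDomain R] [CharZero R] (n : ℕ) :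
    (-(A n).map (Int.cast : ℤ → R)).rank = n := by
  have hmap : ((A n).map (Int.cast : ℤ → R)).det = ((A n).det : R) :=
    ((Int.castRingHom R).map_det (A n)).symm
  have hdet : (-(A n).map (Int.cast : ℤ → R)).det ≠ 0 := by
    rw [det_neg, hmap]
    exact mul_ne_zero (pow_ne_zero _ (neg_ne_zero.mpr one_ne_zero))
      (Int.cast_ne_zero.mpr (det_A_ne_zero n))
  rw [rank_of_det_ne_zero hdet, Fintype.card_fin]

end CartanMatrix

theorem DeltaA8_submatrix_eq_neg_A (s : ℂ) :
    (DeltaA8 s).submatrix ![2, 3, 4, 5, 6, 7, 8, 0] ![2, 3, 4, 5, 6, 7, 8, 0] =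
      -(CartanMatrix.A 8).map (Int.cast : ℤ → ℂ) := by
  ext i j
  fin_cases i <;> fin_cases j <;> simp [DeltaA8, CartanMatrix.A]

theorem DeltaA8_rank_ge_eight_general (s : ℂ) :
    8 ≤ (DeltaA8 s).rank := by
  calc 8 = (-(CartanMatrix.A 8).map (Int.cast : ℤ → ℂ)).rank :=
        (CartanMatrix.rank_neg_map_A 8).symm
    _ = ((DeltaA8 s).submatrix ![2, 3, 4, 5, 6, 7, 8, 0] ![2, 3, 4, 5, 6, 7, 8, 0]).rank := by
        rw [DeltaA8_submatrix_eq_neg_A]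
    _ ≤ (DeltaA8 s).rank := rank_submatrix_le _ _ _

theorem DeltaA8_rank_ge_eight (s : ℂ) (hs : s ≠ 0) :
    8 ≤ (DeltaA8 s).rank :=
  DeltaA8_rank_ge_eight_general s
end
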